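/- arXiv:1901.06453 — 2 statements merged into one kernel-verified Lean document; each statement's English description precedes it below -/
import Mathlib

section
/- Let n ≥ 1, m ≥ 4n−1, and let R ∈ ℂ^{n×n} be any reference with all entry magnitudes at most 1 and R(n−1,n−1) ≠ 0. Then the reference scaling factor satisfies S_R(k1,k2) ≥ 1/m⁴ for all k1, k2 ∈ {0,...,m−1}. -/
open Complex MeasureTheory ProbabilityTheory Matrix ComplexConjugate
open scoped Kronecker

/-!
`M_R` is lower triangular for the componentwise order on index pairs, with constant diagonal
`conj R(n-1,n-1)`; hence it is invertible, and since `(0,0)` is the least index, its row there is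
that diagonal entry alone. The `(0,0)` row of `M_R⁻¹ [(P2 F_RA^*) ⊗ (P1 F_LA^*)]` is therefore
the unimodular Fourier row divided by `conj R(n-1,n-1)`, whose modulus is at most `1`, so that
single entry of `T_R` already has modulus at least `1/m²`.
-/

noncomputable section

/-- Zero-extension of a matrix to integer indices: out-of-range entries are `0`. -/
def zext {n1 n2 : ℕ} (X : Matrix (Fin n1) (Fin n2) ℂ) (t1 t2 : ℤ) : ℂ :=
  if h : 0 ≤ t1 ∧ t1 < (n1 : ℤ) ∧ 0 ≤ t2 ∧ t2 < (n2 : ℤ) then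
    X ⟨t1.toNat, by omega⟩ ⟨t2.toNat, by omega⟩
  else 0

/-- Cross-correlation `C_{[X1,X2]}(s1,s2)`, with out-of-range terms taken as `0`. -/
def crossCorr {n1 n2 : ℕ} (X1 X2 : Matrix (Fin n1) (Fin n2) ℂ) (s1 s2 : ℤ) : ℂ :=
  ∑ t1 : Fin n1, ∑ t2 : Fin n2,
    X1 t1 t2 * conj (zext X2 (((t1 : ℕ) : ℤ) - s1) (((t2 : ℕ) : ℤ) - s2))

/-- Autocorrelation `A_X = C_{[X,X]}`. -/
def autocorr {n1 n2 : ℕ} (X : Matrix (Fin n1) (Fin n2) ℂ) : ℤ → ℤ → ℂ :=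
  crossCorr X X

/-- Horizontal concatenation `[X, R]` of two `n × n` matrices. -/
def hcat {n : ℕ} (X R : Matrix (Fin n) (Fin n) ℂ) : Matrix (Fin n) (Fin (2 * n)) ℂ :=
  Matrix.of fun t1 t2 =>
    if h : (t2 : ℕ) < n then X t1 ⟨t2, h⟩ else R t1 ⟨(t2 : ℕ) - n, by omega⟩

/-- The size `m1 × m2` oversampled discrete Fourier transform of an `n1 × n2` signal. -/
def dft2 {n1 n2 : ℕ} (m1 m2 : ℕ) (Z : Matrix (Fin n1) (Fin n2) ℂ) (k1 k2 : ℕ) : ℂ :=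
  ∑ t1 : Fin n1, ∑ t2 : Fin n2,
    Z t1 t2 * Complex.exp (-(2 * (Real.pi : ℂ) * Complex.I) *
      (((t1 : ℕ) : ℂ) * (k1 : ℂ) / (m1 : ℂ) + ((t2 : ℕ) : ℂ) * (k2 : ℂ) / (m2 : ℂ)))

/-- Quadrant cross-correlation `C°_{[X,R]}(i,j) = C_{[X,R]}(i-(n-1), j-(n-1))`. -/
def quadCC {n : ℕ} (X R : Matrix (Fin n) (Fin n) ℂ) : Matrix (Fin n) (Fin n) ℂ :=
  Matrix.of fun i j =>
    crossCorr X R (((i : ℕ) : ℤ) - ((n : ℤ) - 1)) (((j : ℕ) : ℤ) - ((n : ℤ) - 1))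

/-- Columnwise vectorization: the pair `(j, i)` (column `j`, row `i`) indexes entry `X i j`. -/
def vecM {a b : ℕ} (X : Matrix (Fin a) (Fin b) ℂ) : Fin b × Fin a → ℂ :=
  fun p => X p.2 p.1

/-- The matrix `M_R` satisfying `vec (C°_{[X,R]}) = M_R • vec X` (columnwise vectorization). -/
def MR {n : ℕ} (R : Matrix (Fin n) (Fin n) ℂ) :
    Matrix (Fin n × Fin n) (Fin n × Fin n) ℂ :=
  Matrix.of fun p q =>
    conj (zext R (((q.2 : ℕ) : ℤ) - ((p.2 : ℕ) : ℤ) + ((n : ℤ) - 1))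
      (((q.1 : ℕ) : ℤ) - ((p.1 : ℕ) : ℤ) + ((n : ℤ) - 1)))

/-- `P1 · F_LA^*`: row `t ∈ {0,…,n-1}` corresponds to the column `t - (n-1)` of `F_LA`. -/
def P1FLA (n m : ℕ) : Matrix (Fin n) (Fin m) ℂ :=
  Matrix.of fun t k =>
    Complex.exp ((2 * (Real.pi : ℂ) * Complex.I) * ((k : ℕ) : ℂ) *
      (((t : ℕ) : ℂ) - ((n : ℂ) - 1)) / (m : ℂ))

/-- `P2 · F_RA^*`: row `t ∈ {0,…,n-1}` corresponds to the column `t - (2n-1)` of `F_RA`. -/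
def P2FRA (n m : ℕ) : Matrix (Fin n) (Fin m) ℂ :=
  Matrix.of fun t k =>
    Complex.exp ((2 * (Real.pi : ℂ) * Complex.I) * ((k : ℕ) : ℂ) *
      (((t : ℕ) : ℂ) - (2 * (n : ℂ) - 1)) / (m : ℂ))

/-- The referenced-deconvolution matrix
`T_R = (1/m²) · M_R⁻¹ · [(P2 F_RA^*) ⊗ (P1 F_LA^*)]`. -/
def TR {n : ℕ} (m : ℕ) (R : Matrix (Fin n) (Fin n) ℂ) :
    Matrix (Fin n × Fin n) (Fin m × Fin m) ℂ :=
  ((m : ℂ) ^ 2)⁻¹ • ((MR R)⁻¹ * (P2FRA n m ⊗ₖ P1FLA n m))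

/-- The reference scaling factor: `S_R(k1,k2)` is the squared ℓ²-norm of the column of `T_R`
indexed by the pair `(k1, k2)` (i.e. column `m·k1 + k2`). -/
def SR {n : ℕ} (m : ℕ) (R : Matrix (Fin n) (Fin n) ℂ) (k1 k2 : Fin m) : ℝ :=
  ∑ p : Fin n × Fin n, ‖TR m R p (k1, k2)‖ ^ 2

/-- Lower-triangular all-ones matrix `1_L`. -/
def oneL (n : ℕ) : Matrix (Fin n) (Fin n) ℂ :=
  Matrix.of fun i j => if j ≤ i then 1 else 0

/-- First-order difference matrix `D_n` (the inverse of `1_L`). -/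
def Dmat (n : ℕ) : Matrix (Fin n) (Fin n) ℂ :=
  Matrix.of fun i j => if i = j then 1 else if (j : ℕ) + 1 = (i : ℕ) then -1 else 0

/-- Pinhole reference. -/
def pinholeRef (n : ℕ) : Matrix (Fin n) (Fin n) ℂ :=
  Matrix.of fun t1 t2 => if (t1 : ℕ) = n - 1 ∧ (t2 : ℕ) = n - 1 then 1 else 0

/-- Slit reference. -/
def slitRef (n : ℕ) : Matrix (Fin n) (Fin n) ℂ :=
  Matrix.of fun _ t2 => if (t2 : ℕ) = n - 1 then 1 else 0

/-- Block reference. -/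
def blockRef (n : ℕ) : Matrix (Fin n) (Fin n) ℂ :=
  Matrix.of fun _ _ => 1

def lastIdx {n : ℕ} (hn : 1 ≤ n) : Fin n := ⟨n - 1, Nat.sub_lt hn Nat.one_pos⟩

theorem Matrix.det_of_apply_eq_zero_of_not_le {α β R : Type*} [Fintype α] [Fintype β]
    [LinearOrder α] [LinearOrder β] [CommRing R] (M : Matrix (α × β) (α × β) R)
    (hM : ∀ p q, ¬q ≤ p → M p q = 0) : M.det = ∏ p, M p p := by
  rw [← det_reindex_self toLex M, det_of_isLowerTriangular]
  · exact Fintype.prod_equiv toLex.symm _ _ fun _ => rfl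
  · intro i j hij
    exact hM _ _ fun hle => (Prod.Lex.toLex_mono hle).not_gt hij

theorem Matrix.apply_self_mul_inv_mul_apply {ι κ R : Type*} [Fintype ι] [DecidableEq ι]
    [CommRing R] (M : Matrix ι ι R) (hM : IsUnit M.det) (B : Matrix ι κ R) (i : ι) (k : κ)
    (hrow : ∀ j, j ≠ i → M i j = 0) : M i i * (M⁻¹ * B) i k = B i k := by
  have hB : (M * (M⁻¹ * B)) i k = B i k := by
    rw [← Matrix.mul_assoc, mul_nonsing_inv M hM, Matrix.one_mul]
  rwa [mul_apply, Finset.sum_eq_single_of_mem i (Finset.mem_univ i)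
    fun j _ hj => by rw [hrow j hj, zero_mul]] at hB

lemma MR_apply_eq_zero {n : ℕ} (R : Matrix (Fin n) (Fin n) ℂ) {p q : Fin n × Fin n}
    (h : ¬q ≤ p) : MR R p q = 0 := by
  rw [Prod.mk_le_mk, Fin.le_iff_val_le_val, Fin.le_iff_val_le_val] at h
  rw [MR, of_apply, zext, dif_neg (by omega), map_zero]

lemma MR_apply_self {n : ℕ} (hn : 1 ≤ n) (R : Matrix (Fin n) (Fin n) ℂ) (p : Fin n × Fin n) :
    MR R p p = conj (R (lastIdx hn) (lastIdx hn)) := by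
  rw [MR, of_apply, sub_self, zero_add, zext, dif_pos (by omega)]
  congr <;> omega

lemma det_MR {n : ℕ} (hn : 1 ≤ n) (R : Matrix (Fin n) (Fin n) ℂ) :
    (MR R).det = conj (R (lastIdx hn) (lastIdx hn)) ^ (n * n) := by
  rw [det_of_apply_eq_zero_of_not_le _ fun _ _ => MR_apply_eq_zero R]
  simp [MR_apply_self hn]

lemma norm_P1FLA (n m : ℕ) (t : Fin n) (k : Fin m) : ‖P1FLA n m t k‖ = 1 := by
  simp [P1FLA, Complex.norm_exp]

lemma norm_P2FRA (n m : ℕ) (t : Fin n) (k : Fin m) : ‖P2FRA n m t k‖ = 1 := by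
  simp [P2FRA, Complex.norm_exp]

lemma norm_TR_apply_zero {n : ℕ} (hn : 1 ≤ n) (m : ℕ) (R : Matrix (Fin n) (Fin n) ℂ)
    (hR : R (lastIdx hn) (lastIdx hn) ≠ 0) (k : Fin m × Fin m) :
    ‖TR m R (⟨0, hn⟩, ⟨0, hn⟩) k‖ =
      ((m : ℝ) ^ 2 * ‖R (lastIdx hn) (lastIdx hn)‖)⁻¹ := by
  set p₀ : Fin n × Fin n := (⟨0, hn⟩, ⟨0, hn⟩)
  have hdet : IsUnit (MR R).det := by
    rw [det_MR hn, isUnit_iff_ne_zero]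
    exact pow_ne_zero _ ((map_ne_zero _).2 hR)
  have hrow : ∀ q, q ≠ p₀ → MR R p₀ q = 0 := fun q hq =>
    MR_apply_eq_zero R fun hle => hq (le_antisymm hle
      (Prod.mk_le_mk.2 ⟨Nat.zero_le _, Nat.zero_le _⟩))
  have key := apply_self_mul_inv_mul_apply _ hdet (P2FRA n m ⊗ₖ P1FLA n m) p₀ k hrow
  rw [MR_apply_self hn, kroneckerMap_apply] at key
  have hnorm := congrArg norm key
  rw [norm_mul, norm_mul, norm_P2FRA, norm_P1FLA, Complex.norm_conj, mul_one] at hnorm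
  rw [TR, Matrix.smul_apply, smul_eq_mul, norm_mul, norm_inv, norm_pow, Complex.norm_natCast,
    mul_inv, eq_inv_of_mul_eq_one_right hnorm]

/-- Uniform lower bound on the reference scaling factor: for any reference with
entry magnitudes at most `1` and `R(n-1,n-1) ≠ 0`, `S_R(k1,k2) ≥ 1/m⁴`. -/
theorem scaling_factor_uniform_lower_bound
    (n m : ℕ) (hn : 1 ≤ n)
    (R : Matrix (Fin n) (Fin n) ℂ)
    (hmag : ∀ t1 t2 : Fin n, ‖R t1 t2‖ ≤ 1)
    (hR : R ⟨n - 1, by omega⟩ ⟨n - 1, by omega⟩ ≠ 0)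
    (k1 k2 : Fin m) :
    1 / (m : ℝ) ^ 4 ≤ SR m R k1 k2 := by
  have hm : (0 : ℝ) < m := Nat.cast_pos.2 k1.pos
  calc 1 / (m : ℝ) ^ 4 = ((m : ℝ) ^ 2 * 1)⁻¹ ^ 2 := by ring
    _ ≤ ((m : ℝ) ^ 2 * ‖R (lastIdx hn) (lastIdx hn)‖)⁻¹ ^ 2 := by
      gcongr; exact hmag _ _
    _ = ‖TR m R (⟨0, hn⟩, ⟨0, hn⟩) (k1, k2)‖ ^ 2 := by rw [norm_TR_apply_zero hn m R hR]
    _ ≤ SR m R k1 k2 :=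
      Finset.single_le_sum (f := fun p => ‖TR m R p (k1, k2)‖ ^ 2) (fun _ _ => by positivity)
        (Finset.mem_univ _)
end
end

section
/- Let n ≥ 1, m ≥ 4n−1, and let R be any one of the pinhole reference (R_p(t1,t2) = 1 iff (t1,t2)=(n−1,n−1)), the slit reference (R_s(t1,t2) = 1 iff t2 = n−1), or the block reference (R_b ≡ 1). Then the deconvolution matrix T_R satisfies the norm bounds ‖T_R‖_op ≤ 4/m and ‖T_R*·T_R‖_F ≤ 16·n/m². (In the pinhole case the sharper equalities ‖T_{R_p}‖_op = 1/m and ‖T_{R_p}*·T_{R_p}‖_F ≤ n/m² hold.) -/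
open Complex MeasureTheory ProbabilityTheory Matrix ComplexConjugate
open scoped Kronecker

noncomputable section

/-- The ℓ² operator (spectral) norm of a complex matrix. -/
def opNorm {α β : Type*} [Fintype α] [Fintype β] [DecidableEq β] (A : Matrix α β ℂ) : ℝ :=
  ‖LinearMap.toContinuousLinearMap (Matrix.toEuclideanLin A)‖

/-- The Frobenius norm of a complex matrix. -/
def frobNorm {α β : Type*} [Fintype α] [Fintype β] (A : Matrix α β ℂ) : ℝ :=
  Real.sqrt (∑ i, ∑ j, ‖A i j‖ ^ 2)

open scoped Matrix.Norms.L2Operator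

/-!
Write `T_R = m⁻² • (M_R⁻¹ * F)` with `F = (P2 F_RA*) ⊗ (P1 F_LA*)`. As `n ≤ m`, distinct rows of
each factor of `F` are orthogonal (their inner product is a full geometric sum of a nontrivial
`m`-th root of unity), so `F F* = m² I`, `‖F‖ = m` and `‖T_R‖ ≤ ‖M_R⁻¹‖ / m`, with equality
`‖T_R‖ = 1/m` for the pinhole, where `M_R = I`. For the slit and the block, `M_R⁻¹` is `I ⊗ D` or
`D ⊗ D` with `D = I - N` and `N` the lower shift; since `N*N` and `I*I` are projections, every
Kronecker product of `I` and `N` has norm at most `1`, whence `‖M_R⁻¹‖ ≤ 4`. Finally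
`‖T*T‖_F ≤ ‖T*‖ ‖T‖_F = ‖T‖ ‖T*‖_F ≤ n ‖T‖²`, because `T*` has `n²` columns.
-/

theorem opNorm_eq_l2_opNorm {α β : Type*} [Fintype α] [Fintype β] [DecidableEq β]
    (A : Matrix α β ℂ) : opNorm A = ‖A‖ :=
  rfl

theorem Matrix.sub_kronecker {R ι κ ι' κ' : Type*} [Ring R] (A B : Matrix ι κ R)
    (C : Matrix ι' κ' R) : (A - B) ⊗ₖ C = A ⊗ₖ C - B ⊗ₖ C := by
  ext; simp [sub_mul]

theorem Matrix.kronecker_sub {R ι κ ι' κ' : Type*} [Ring R] (A : Matrix ι κ R)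
    (B C : Matrix ι' κ' R) : A ⊗ₖ (B - C) = A ⊗ₖ B - A ⊗ₖ C := by
  ext; simp [mul_sub]

theorem IsIdempotentElem.kronecker {R α β : Type*} [CommSemiring R] [Fintype α] [Fintype β]
    {A : Matrix α α R} {B : Matrix β β R} (hA : IsIdempotentElem A) (hB : IsIdempotentElem B) :
    IsIdempotentElem (A ⊗ₖ B) := by
  rw [IsIdempotentElem, ← mul_kronecker_mul, hA.eq, hB.eq]

theorem Fin.sum_ite_val_eq {M : Type*} [AddCommMonoid M] {n : ℕ} (c : ℕ) (v : M) :
    (∑ k : Fin n, if (k : ℕ) = c then v else 0) = if c < n then v else 0 := by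
  split_ifs with hc
  · rw [Finset.sum_eq_single_of_mem (⟨c, hc⟩ : Fin n) (Finset.mem_univ _)]
    · simp
    · intro k _ hk
      exact if_neg fun h => hk (Fin.ext h)
  · exact Finset.sum_eq_zero fun k _ => if_neg (by have := k.isLt; omega)

theorem IsPrimitiveRoot.geom_sum_zpow_eq_zero {K : Type*} [Field K] {ζ : K} {m : ℕ}
    (hζ : IsPrimitiveRoot ζ m) {d : ℤ} (hd : ¬ (m : ℤ) ∣ d) :
    ∑ k ∈ Finset.range m, (ζ ^ d) ^ k = 0 := by
  have hne : ζ ^ d ≠ 1 := fun h => hd ((hζ.zpow_eq_one_iff_dvd d).mp h)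
  rw [geom_sum_eq hne, ← zpow_natCast, ← _root_.zpow_mul, mul_comm, _root_.zpow_mul,
    zpow_natCast, hζ.pow_eq_one, _root_.one_zpow, sub_self, zero_div]

section L2OpNorm

variable {𝕜 α β : Type*} [RCLike 𝕜] [Fintype α] [Fintype β] [DecidableEq β]

theorem Matrix.l2_opNorm_eq_of_mul_conjTranspose_eq [DecidableEq α] [Nonempty α]
    {A : Matrix α β 𝕜} {r : ℝ} (hr : 0 ≤ r) (h : A * Aᴴ = (r : 𝕜) ^ 2 • 1) : ‖A‖ = r := by
  have hsq : ‖A‖ ^ 2 = r ^ 2 := by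
    rw [sq, ← l2_opNorm_conjTranspose A, ← l2_opNorm_conjTranspose_mul_self,
      conjTranspose_conjTranspose, h, norm_smul, norm_one, mul_one, norm_pow,
      RCLike.norm_ofReal, abs_of_nonneg hr]
  exact (pow_left_inj₀ (norm_nonneg A) hr two_ne_zero).mp hsq

theorem Matrix.l2_opNorm_le_one_of_isIdempotentElem {X : Matrix α β 𝕜}
    (hX : IsIdempotentElem (Xᴴ * X)) : ‖X‖ ≤ 1 := by
  set P := Xᴴ * X
  have hP : ‖P‖ * ‖P‖ = ‖P‖ := by
    conv_rhs => rw [← hX.eq]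
    rw [← l2_opNorm_conjTranspose_mul_self, conjTranspose_mul, conjTranspose_conjTranspose]
  have hPX : ‖P‖ = ‖X‖ * ‖X‖ := l2_opNorm_conjTranspose_mul_self X
  have hP1 : ‖P‖ ≤ 1 := by nlinarith [norm_nonneg P]
  nlinarith [norm_nonneg X]

theorem Matrix.l2_opNorm_kronecker_le_one {α' β' : Type*} [Fintype α'] [Fintype β']
    [DecidableEq β'] {X : Matrix α β 𝕜} {Y : Matrix α' β' 𝕜}
    (hX : IsIdempotentElem (Xᴴ * X)) (hY : IsIdempotentElem (Yᴴ * Y)) : ‖X ⊗ₖ Y‖ ≤ 1 := by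
  apply l2_opNorm_le_one_of_isIdempotentElem
  rw [conjTranspose_kronecker, ← mul_kronecker_mul]
  exact hX.kronecker hY

end L2OpNorm

section Frobenius

variable {α β γ : Type*} [Fintype α] [Fintype β] [Fintype γ]

theorem sum_sum_norm_sq_eq_sum_col {𝕜 : Type*} [RCLike 𝕜] (A : Matrix α β 𝕜) :
    ∑ i, ∑ j, ‖A i j‖ ^ 2 = ∑ j, ‖WithLp.toLp 2 (fun i => A i j)‖ ^ 2 := by
  rw [Finset.sum_comm]
  simp [EuclideanSpace.norm_sq_eq]

theorem sum_sum_norm_sq_mul_le {𝕜 : Type*} [RCLike 𝕜] [DecidableEq β] (A : Matrix α β 𝕜)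
    (B : Matrix β γ 𝕜) : ∑ i, ∑ j, ‖(A * B) i j‖ ^ 2 ≤ ‖A‖ ^ 2 * ∑ i, ∑ j, ‖B i j‖ ^ 2 := by
  rw [sum_sum_norm_sq_eq_sum_col, sum_sum_norm_sq_eq_sum_col, Finset.mul_sum]
  refine Finset.sum_le_sum fun j _ => ?_
  rw [← mul_pow]
  gcongr
  exact l2_opNorm_mulVec A (WithLp.toLp 2 fun i => B i j)

theorem frobNorm_mul_le [DecidableEq β] (A : Matrix α β ℂ) (B : Matrix β γ ℂ) :
    frobNorm (A * B) ≤ ‖A‖ * frobNorm B := by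
  rw [frobNorm, frobNorm, ← Real.sqrt_sq (norm_nonneg A), ← Real.sqrt_mul (sq_nonneg _)]
  exact Real.sqrt_le_sqrt (sum_sum_norm_sq_mul_le A B)

theorem frobNorm_conjTranspose (A : Matrix α β ℂ) : frobNorm Aᴴ = frobNorm A := by
  simp only [frobNorm, conjTranspose_apply, norm_star]
  rw [Finset.sum_comm]

theorem frobNorm_one [DecidableEq α] : frobNorm (1 : Matrix α α ℂ) = √(Fintype.card α) := by
  simp only [frobNorm, one_apply, apply_ite norm, norm_one, norm_zero, ite_pow, one_pow,
    ne_eq, OfNat.ofNat_ne_zero, not_false_eq_true, zero_pow, Finset.sum_ite_eq, Finset.mem_univ,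
    if_true, Finset.sum_const, Finset.card_univ, nsmul_eq_mul, mul_one]

theorem frobNorm_conjTranspose_mul_self_le [DecidableEq α] [DecidableEq β] (A : Matrix α β ℂ) :
    frobNorm (Aᴴ * A) ≤ √(Fintype.card α) * ‖A‖ ^ 2 :=
  calc frobNorm (Aᴴ * A) ≤ ‖Aᴴ‖ * frobNorm A := frobNorm_mul_le _ _
    _ = ‖A‖ * frobNorm (Aᴴ * (1 : Matrix α α ℂ)) := by
      rw [l2_opNorm_conjTranspose, Matrix.mul_one, frobNorm_conjTranspose]
    _ ≤ ‖A‖ * (‖Aᴴ‖ * frobNorm (1 : Matrix α α ℂ)) := by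
      gcongr
      exact frobNorm_mul_le _ _
    _ = √(Fintype.card α) * ‖A‖ ^ 2 := by
      rw [l2_opNorm_conjTranspose, frobNorm_one]
      ring

end Frobenius

-- `P2FRA n m` and `P1FLA n m` are `shiftedDFT n m c` for `c = 2n - 1` and `c = n - 1`.
def shiftedDFT (n m : ℕ) (c : ℂ) : Matrix (Fin n) (Fin m) ℂ :=
  Matrix.of fun t k =>
    Complex.exp ((2 * (Real.pi : ℂ) * Complex.I) * ((k : ℕ) : ℂ) * (((t : ℕ) : ℂ) - c) / (m : ℂ))

theorem shiftedDFT_mul_conjTranspose {n m : ℕ} (hnm : n ≤ m) {c : ℂ} (hc : conj c = c) :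
    shiftedDFT n m c * (shiftedDFT n m c)ᴴ = (m : ℂ) • 1 := by
  ext t t'
  set ζ := Complex.exp (2 * Real.pi * Complex.I / m)
  have hζ : IsPrimitiveRoot ζ m := Complex.isPrimitiveRoot_exp m (by have := t.isLt; omega)
  set d : ℤ := (t : ℤ) - (t' : ℤ)
  have hentry : ∀ k : Fin m, shiftedDFT n m c t k * star (shiftedDFT n m c t' k) =
      (ζ ^ d) ^ (k : ℕ) := by
    intro k
    rw [← zpow_natCast, ← _root_.zpow_mul, ← Complex.exp_int_mul, RCLike.star_def]
    simp only [shiftedDFT, Matrix.of_apply]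
    rw [← Complex.exp_conj, ← Complex.exp_add]
    simp only [map_div₀, map_mul, map_sub, Complex.conj_I, Complex.conj_natCast,
      Complex.conj_ofReal, map_ofNat, hc, d]
    congr 1
    push_cast
    field_simp
    ring
  simp only [Matrix.mul_apply, Matrix.conjTranspose_apply, hentry, Matrix.smul_apply,
    Matrix.one_apply, Fin.sum_univ_eq_sum_range (fun k => (ζ ^ d) ^ k) m, smul_eq_mul]
  split_ifs with htt
  · simp [htt, d]
  · rw [mul_zero]
    refine hζ.geom_sum_zpow_eq_zero fun hdvd => htt ?_
    have := Int.eq_zero_of_abs_lt_dvd hdvd (by rw [abs_lt]; omega)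
    omega

theorem P2FRA_kronecker_P1FLA_mul_conjTranspose {n m : ℕ} (hnm : n ≤ m) :
    (P2FRA n m ⊗ₖ P1FLA n m) * (P2FRA n m ⊗ₖ P1FLA n m)ᴴ = ((m : ℝ) : ℂ) ^ 2 • 1 := by
  have h2 : P2FRA n m * (P2FRA n m)ᴴ = (m : ℂ) • 1 :=
    shiftedDFT_mul_conjTranspose hnm (c := 2 * n - 1) (by simp [map_ofNat])
  have h1 : P1FLA n m * (P1FLA n m)ᴴ = (m : ℂ) • 1 :=
    shiftedDFT_mul_conjTranspose hnm (c := n - 1) (by simp)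
  rw [conjTranspose_kronecker, ← mul_kronecker_mul, h1, h2, smul_kronecker, kronecker_smul,
    one_kronecker_one, smul_smul, Complex.ofReal_natCast, sq]

def shiftMat (n : ℕ) : Matrix (Fin n) (Fin n) ℂ :=
  Matrix.of fun i j => if (j : ℕ) + 1 = i then 1 else 0

theorem Dmat_eq_one_sub_shiftMat (n : ℕ) : Dmat n = 1 - shiftMat n := by
  ext i j
  simp only [Dmat, shiftMat, Matrix.sub_apply, of_apply, one_apply, Fin.ext_iff]
  split_ifs <;> first | (exfalso; omega) | norm_num

theorem conjTranspose_shiftMat_mul_self (n : ℕ) :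
    (shiftMat n)ᴴ * shiftMat n =
      diagonal fun i : Fin n => if (i : ℕ) + 1 < n then (1 : ℂ) else 0 := by
  ext i j
  have hterm : ∀ k : Fin n, (shiftMat n)ᴴ i k * shiftMat n k j =
      if (k : ℕ) = i + 1 then (if i = j then 1 else 0) else 0 := by
    intro k
    simp only [shiftMat, conjTranspose_apply, of_apply, Fin.ext_iff]
    split_ifs <;> first | (exfalso; omega) | simp
  rw [mul_apply, Finset.sum_congr rfl fun k _ => hterm k, Fin.sum_ite_val_eq, diagonal_apply]
  split_ifs <;> simp_all

theorem isIdempotentElem_conjTranspose_shiftMat_mul_self (n : ℕ) :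
    IsIdempotentElem ((shiftMat n)ᴴ * shiftMat n) := by
  rw [conjTranspose_shiftMat_mul_self, IsIdempotentElem, diagonal_mul_diagonal]
  congr 1
  ext i
  split_ifs <;> simp

theorem oneL_mul_Dmat (n : ℕ) : oneL n * Dmat n = 1 := by
  ext i j
  have hterm : ∀ k : Fin n, oneL n i k * Dmat n k j =
      (if (k : ℕ) = j then (if j ≤ i then 1 else 0) else 0)
      + (if (k : ℕ) = j + 1 then (if (j : ℕ) + 1 ≤ i then -1 else 0) else 0) := by
    intro k
    simp only [oneL, Dmat, of_apply, Fin.ext_iff, Fin.le_def]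
    split_ifs <;> first | (exfalso; omega) | norm_num
  rw [mul_apply, Finset.sum_congr rfl fun k _ => hterm k, Finset.sum_add_distrib,
    Fin.sum_ite_val_eq, Fin.sum_ite_val_eq, one_apply]
  have := i.isLt
  simp only [Fin.ext_iff, Fin.le_def]
  split_ifs <;> first | (exfalso; omega) | norm_num

theorem MR_pinholeRef (n : ℕ) : MR (pinholeRef n) = 1 := by
  ext p q
  have := p.1.isLt; have := p.2.isLt; have := q.1.isLt; have := q.2.isLt
  simp only [MR, pinholeRef, zext, of_apply, one_apply, Prod.ext_iff, Fin.ext_iff]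
  split_ifs <;> first | (exfalso; omega) | simp

theorem MR_slitRef (n : ℕ) : MR (slitRef n) = (1 : Matrix (Fin n) (Fin n) ℂ) ⊗ₖ oneL n := by
  ext p q
  have := p.1.isLt; have := p.2.isLt; have := q.1.isLt; have := q.2.isLt
  simp only [MR, slitRef, zext, oneL, kroneckerMap_apply, of_apply, one_apply, Fin.ext_iff,
    Fin.le_def]
  split_ifs <;> first | (exfalso; omega) | simp

theorem MR_blockRef (n : ℕ) : MR (blockRef n) = oneL n ⊗ₖ oneL n := by
  ext p q
  have := p.1.isLt; have := p.2.isLt; have := q.1.isLt; have := q.2.isLt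
  simp only [MR, blockRef, zext, oneL, kroneckerMap_apply, of_apply, Fin.le_def]
  split_ifs <;> first | (exfalso; omega) | simp

theorem inv_MR_slitRef (n : ℕ) :
    (MR (slitRef n))⁻¹ = (1 : Matrix (Fin n) (Fin n) ℂ) ⊗ₖ Dmat n := by
  rw [MR_slitRef]
  refine inv_eq_right_inv ?_
  rw [← mul_kronecker_mul, oneL_mul_Dmat, Matrix.mul_one, one_kronecker_one]

theorem inv_MR_blockRef (n : ℕ) : (MR (blockRef n))⁻¹ = Dmat n ⊗ₖ Dmat n := by
  rw [MR_blockRef]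
  refine inv_eq_right_inv ?_
  rw [← mul_kronecker_mul, oneL_mul_Dmat, one_kronecker_one]

theorem l2_opNorm_inv_MR_le_four {n : ℕ} {R : Matrix (Fin n) (Fin n) ℂ}
    (hR : R = pinholeRef n ∨ R = slitRef n ∨ R = blockRef n) : ‖(MR R)⁻¹‖ ≤ 4 := by
  have hone : IsIdempotentElem ((1 : Matrix (Fin n) (Fin n) ℂ)ᴴ * 1) := by
    simp [IsIdempotentElem]
  have hshift := isIdempotentElem_conjTranspose_shiftMat_mul_self n
  have h1 : ‖(1 : Matrix (Fin n) (Fin n) ℂ) ⊗ₖ 1‖ ≤ 1 := l2_opNorm_kronecker_le_one hone hone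
  have h2 : ‖(1 : Matrix (Fin n) (Fin n) ℂ) ⊗ₖ shiftMat n‖ ≤ 1 :=
    l2_opNorm_kronecker_le_one hone hshift
  have h3 : ‖shiftMat n ⊗ₖ (1 : Matrix (Fin n) (Fin n) ℂ)‖ ≤ 1 :=
    l2_opNorm_kronecker_le_one hshift hone
  have h4 : ‖shiftMat n ⊗ₖ shiftMat n‖ ≤ 1 := l2_opNorm_kronecker_le_one hshift hshift
  rcases hR with rfl | rfl | rfl
  · rw [MR_pinholeRef, inv_one, ← one_kronecker_one]
    linarith
  · rw [inv_MR_slitRef, Dmat_eq_one_sub_shiftMat, kronecker_sub]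
    linarith [norm_sub_le ((1 : Matrix (Fin n) (Fin n) ℂ) ⊗ₖ 1) (1 ⊗ₖ shiftMat n)]
  · rw [inv_MR_blockRef, Dmat_eq_one_sub_shiftMat, sub_kronecker, kronecker_sub, kronecker_sub]
    linarith [norm_sub_le ((1 : Matrix (Fin n) (Fin n) ℂ) ⊗ₖ 1 - 1 ⊗ₖ shiftMat n)
        (shiftMat n ⊗ₖ 1 - shiftMat n ⊗ₖ shiftMat n),
      norm_sub_le ((1 : Matrix (Fin n) (Fin n) ℂ) ⊗ₖ 1) (1 ⊗ₖ shiftMat n),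
      norm_sub_le (shiftMat n ⊗ₖ (1 : Matrix (Fin n) (Fin n) ℂ)) (shiftMat n ⊗ₖ shiftMat n)]

section TR

variable {n m : ℕ}

theorem l2_opNorm_P2FRA_kronecker_P1FLA (hn : 1 ≤ n) (hnm : n ≤ m) : ‖P2FRA n m ⊗ₖ P1FLA n m‖ = m :=
  have : Nonempty (Fin n) := ⟨⟨0, hn⟩⟩
  l2_opNorm_eq_of_mul_conjTranspose_eq (Nat.cast_nonneg m)
    (P2FRA_kronecker_P1FLA_mul_conjTranspose hnm)

theorem l2_opNorm_TR_le (hn : 1 ≤ n) (hnm : n ≤ m) (R : Matrix (Fin n) (Fin n) ℂ) :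
    ‖TR m R‖ ≤ ‖(MR R)⁻¹‖ / m := by
  have hm : (0 : ℝ) < m := by exact_mod_cast (by omega : 0 < m)
  calc ‖TR m R‖ ≤ ((m : ℝ) ^ 2)⁻¹ * (‖(MR R)⁻¹‖ * m) := by
        rw [TR, norm_smul, norm_inv, norm_pow, Complex.norm_natCast,
          ← l2_opNorm_P2FRA_kronecker_P1FLA hn hnm]
        gcongr
        exact l2_opNorm_mul _ _
    _ = ‖(MR R)⁻¹‖ / m := by field_simp

theorem l2_opNorm_TR_pinholeRef (hn : 1 ≤ n) (hnm : n ≤ m) :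
    ‖TR m (pinholeRef n)‖ = 1 / m := by
  have hm : (0 : ℝ) < m := by exact_mod_cast (by omega : 0 < m)
  rw [TR, MR_pinholeRef, inv_one, Matrix.one_mul, norm_smul, norm_inv, norm_pow,
    Complex.norm_natCast, l2_opNorm_P2FRA_kronecker_P1FLA hn hnm]
  field_simp

theorem frobNorm_conjTranspose_mul_self_TR_le (R : Matrix (Fin n) (Fin n) ℂ) :
    frobNorm ((TR m R)ᴴ * TR m R) ≤ n * ‖TR m R‖ ^ 2 := by
  have h := frobNorm_conjTranspose_mul_self_le (TR m R)
  rwa [Fintype.card_prod, Fintype.card_fin, Nat.cast_mul, Real.sqrt_mul_self (Nat.cast_nonneg n)]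
    at h

end TR

/-- For the pinhole, slit, and block references, the deconvolution matrix
satisfies `‖T_R‖_op ≤ 4/m` and `‖T_R*·T_R‖_F ≤ 16n/m²`; in the pinhole case the sharper
`‖T_{R_p}‖_op = 1/m` and `‖T_{R_p}*·T_{R_p}‖_F ≤ n/m²` hold. -/
theorem TR_norm_bounds
    (n m : ℕ) (hn : 1 ≤ n) (hm : 4 * n - 1 ≤ m)
    (R : Matrix (Fin n) (Fin n) ℂ)
    (hR : R = pinholeRef n ∨ R = slitRef n ∨ R = blockRef n) :
    opNorm (TR m R) ≤ 4 / (m : ℝ) ∧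
    frobNorm ((TR m R)ᴴ * TR m R) ≤ 16 * (n : ℝ) / (m : ℝ) ^ 2 ∧
    (R = pinholeRef n →
      opNorm (TR m R) = 1 / (m : ℝ) ∧
      frobNorm ((TR m R)ᴴ * TR m R) ≤ (n : ℝ) / (m : ℝ) ^ 2) := by
  rw [opNorm_eq_l2_opNorm]
  have hnm : n ≤ m := by omega
  have hop : ‖TR m R‖ ≤ 4 / m :=
    (l2_opNorm_TR_le hn hnm R).trans (by gcongr; exact l2_opNorm_inv_MR_le_four hR)
  have hfrob := frobNorm_conjTranspose_mul_self_TR_le (m := m) R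
  refine ⟨hop, hfrob.trans ?_, ?_⟩
  · calc (n : ℝ) * ‖TR m R‖ ^ 2 ≤ n * (4 / m) ^ 2 := by gcongr
      _ = 16 * n / (m : ℝ) ^ 2 := by ring
  · rintro rfl
    have hpin : ‖TR m (pinholeRef n)‖ = 1 / m := l2_opNorm_TR_pinholeRef hn hnm
    refine ⟨hpin, hfrob.trans_eq ?_⟩
    rw [hpin]
    ring
end
end
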